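/- For all real x, the hyperbolic Turán-type inequality 𝓘_{p+1}(x)² − ((p+1)/(p+2))·𝓘_p(x)·𝓘_{p+2}(x) > 0 holds for every p > −1. -/

import Mathlib

/-!
With t = x²/4, 𝓘_p(x) = ∑ tⁿ / ((p+1)ₙ n!). By the Chu–Vandermonde identity the Cauchy
product of the series for the parameters a and b has m-th coefficient
tᵐ (a+b+m-1)ₘ / (m! (a)ₘ (b)ₘ).
For (a, b) = (p+2, p+2) and (p+1, p+3) the numerators agree, and
(p+1)/(p+2) · (p+2)ₘ² ≤ (p+1)ₘ (p+3)ₘ, strictly for m = 0. Hence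
𝓘_{p+1}² − (p+1)/(p+2) · 𝓘_p 𝓘_{p+2} is a series of nonnegative terms with constant term
1 − (p+1)/(p+2) > 0.
-/

open Real

noncomputable def besselJn (p x : ℝ) : ℝ :=
  ∑' n : ℕ, (-(1:ℝ)/4)^n * x^(2*n) / ((Real.Gamma (p+n+1) / Real.Gamma (p+1)) * n.factorial)

noncomputable def besselIn (p x : ℝ) : ℝ :=
  ∑' n : ℕ, ((1:ℝ)/4)^n * x^(2*n) / ((Real.Gamma (p+n+1) / Real.Gamma (p+1)) * n.factorial)

noncomputable def besselJ (p x : ℝ) : ℝ :=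
  ∑' n : ℕ, (-1:ℝ)^n * (x/2)^(p+2*n) / (n.factorial * Real.Gamma (p+n+1))

open Polynomial Finset
open scoped Nat

section Pochhammer

variable {R : Type*} [CommRing R]

theorem ascPochhammer_eval_add_nat (a : R) (k l : ℕ) :
    (ascPochhammer R (k + l)).eval a =
      (ascPochhammer R k).eval a * (ascPochhammer R l).eval (a + k) := by
  rw [← ascPochhammer_mul, eval_mul, eval_comp, eval_add, eval_X, eval_natCast]

theorem ascPochhammer_eval_mul_add_nat (a : R) (m : ℕ) :
    (ascPochhammer R m).eval a * (a + m) = a * (ascPochhammer R m).eval (a + 1) := by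
  rw [← ascPochhammer_succ_eval, ascPochhammer_succ_left, eval_mul, eval_X, eval_comp, eval_add,
    eval_X, eval_one]

/-- Chu–Vandermonde for falling factorials at `b + m - 1` and `a + m - 1`: for `k + l = m`,
`(b + l)ₖ` is the falling factorial of `b + m - 1` of length `k`. -/
theorem ascPochhammer_eval_vandermonde (a b : R) (m : ℕ) :
    (ascPochhammer R m).eval (a + b + m - 1) =
      ∑ kl ∈ antidiagonal m, (m.choose kl.1 : R) *
        ((ascPochhammer R kl.1).eval (b + kl.2) * (ascPochhammer R kl.2).eval (a + kl.1)) := by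
  have key := Ring.descPochhammer_smeval_add m (Commute.all (b + m - 1) (a + m - 1))
  simp only [descPochhammer_smeval_eq_ascPochhammer, ascPochhammer_smeval_eq_eval] at key
  convert key using 2
  · ring
  · rename_i kl hkl
    rw [HasAntidiagonal.mem_antidiagonal] at hkl
    congr 3 <;> · rw [← hkl]; push_cast; ring

end Pochhammer

section RealPochhammer

variable {a : ℝ}

theorem one_le_ascPochhammer_eval (ha : 1 ≤ a) (n : ℕ) : 1 ≤ (ascPochhammer ℝ n).eval a := by
  induction n with
  | zero => simp
  | succ n ih =>
    rw [ascPochhammer_succ_eval]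
    exact one_le_mul_of_one_le_of_one_le ih (by linarith [n.cast_nonneg (α := ℝ)])

theorem min_one_le_ascPochhammer_eval (ha : 0 < a) :
    ∀ n : ℕ, min a 1 ≤ (ascPochhammer ℝ n).eval a
  | 0 => by simp
  | n + 1 => by
    rw [ascPochhammer_succ_left, eval_mul, eval_X, eval_comp, eval_add, eval_X, eval_one]
    exact (min_le_left a 1).trans
      (le_mul_of_one_le_right ha.le (one_le_ascPochhammer_eval (by linarith) n))

theorem ascPochhammer_eval_turan (ha : 0 < a) (m : ℕ) :
    a / (a + 1) * (ascPochhammer ℝ m).eval (a + 1) ^ 2 ≤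
      (ascPochhammer ℝ m).eval a * (ascPochhammer ℝ m).eval (a + 2) := by
  have hA := ascPochhammer_eval_mul_add_nat a m
  have hB := ascPochhammer_eval_mul_add_nat (a + 1) m
  rw [show a + 1 + 1 = a + 2 by ring] at hB
  have hm : (0 : ℝ) < a + m := by positivity
  rw [div_mul_eq_mul_div, div_le_iff₀ (by positivity)]
  refine le_of_mul_le_mul_right ?_ hm
  calc a * (ascPochhammer ℝ m).eval (a + 1) ^ 2 * (a + m)
      ≤ a * (ascPochhammer ℝ m).eval (a + 1) ^ 2 * (a + 1 + m) := by gcongr; linarith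
    _ = _ := by
      linear_combination a * (ascPochhammer ℝ m).eval (a + 1) * hB -
        (a + 1) * (ascPochhammer ℝ m).eval (a + 2) * hA

theorem Real.Gamma_add_nat_div_Gamma_eq (ha : 0 < a) (n : ℕ) :
    Gamma (a + n) / Gamma a = (ascPochhammer ℝ n).eval a := by
  induction n with
  | zero => simp [(Gamma_pos_of_pos ha).ne']
  | succ n ih =>
    rw [Nat.cast_succ, ← add_assoc, Gamma_add_one (by positivity), mul_div_assoc, ih,
      ascPochhammer_succ_eval, mul_comm]

end RealPochhammer

noncomputable def hyp0F1Term (a t : ℝ) (n : ℕ) : ℝ := t ^ n / ((ascPochhammer ℝ n).eval a * n !)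

noncomputable def hyp0F1MulCoeff (a b t : ℝ) (m : ℕ) : ℝ :=
  t ^ m * (ascPochhammer ℝ m).eval (a + b + m - 1) /
    (m ! * ((ascPochhammer ℝ m).eval a * (ascPochhammer ℝ m).eval b))

theorem hyp0F1MulCoeff_zero (a b t : ℝ) : hyp0F1MulCoeff a b t 0 = 1 := by
  simp [hyp0F1MulCoeff]

theorem besselIn_eq_tsum_hyp0F1Term {p : ℝ} (hp : -1 < p) (x : ℝ) :
    besselIn p x = ∑' n, hyp0F1Term (p + 1) (x ^ 2 / 4) n := by
  refine tsum_congr fun n => ?_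
  rw [hyp0F1Term, add_right_comm, Real.Gamma_add_nat_div_Gamma_eq (by linarith), div_pow,
    div_pow, one_pow, ← pow_mul, div_mul_eq_mul_div, one_mul]

section Hyp0F1

variable {a b t : ℝ}

theorem hyp0F1Term_nonneg (ha : 0 < a) (ht : 0 ≤ t) (n : ℕ) : 0 ≤ hyp0F1Term a t n := by
  have := ascPochhammer_pos n a ha
  unfold hyp0F1Term
  positivity

theorem summable_hyp0F1Term (ha : 0 < a) (ht : 0 ≤ t) : Summable (hyp0F1Term a t) := by
  refine .of_nonneg_of_le (hyp0F1Term_nonneg ha ht) (fun n => ?_)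
    ((Real.summable_pow_div_factorial t).div_const (min a 1))
  rw [hyp0F1Term, div_div, mul_comm]
  gcongr
  exact min_one_le_ascPochhammer_eval ha n

theorem sum_antidiagonal_hyp0F1Term_mul (ha : 0 < a) (hb : 0 < b) (t : ℝ) (m : ℕ) :
    ∑ kl ∈ antidiagonal m, hyp0F1Term a t kl.1 * hyp0F1Term b t kl.2 =
      hyp0F1MulCoeff a b t m := by
  rw [hyp0F1MulCoeff, ascPochhammer_eval_vandermonde, mul_sum, sum_div]
  refine sum_congr rfl fun kl hkl => ?_
  obtain ⟨k, l⟩ := kl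
  rw [HasAntidiagonal.mem_antidiagonal] at hkl
  subst hkl
  have := ascPochhammer_pos k a ha
  have := ascPochhammer_pos l b hb
  have := ascPochhammer_pos l (a + k) (by positivity)
  have := ascPochhammer_pos k (b + l) (by positivity)
  have hfac : ((k + l).choose k : ℝ) * k ! * l ! = (k + l)! := by
    rw [Nat.choose_symm_add]
    exact_mod_cast Nat.add_choose_mul_factorial_mul_factorial k l
  have : (0 : ℝ) < (k + l).choose k := by exact_mod_cast Nat.choose_pos (Nat.le_add_right k l)
  have hb_split : (ascPochhammer ℝ (k + l)).eval b =
      (ascPochhammer ℝ l).eval b * (ascPochhammer ℝ k).eval (b + l) := by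
    rw [add_comm, ascPochhammer_eval_add_nat]
  dsimp only
  rw [hyp0F1Term, hyp0F1Term, ascPochhammer_eval_add_nat a, hb_split, ← hfac, pow_add]
  field_simp

theorem hasSum_hyp0F1MulCoeff (ha : 0 < a) (hb : 0 < b) (ht : 0 ≤ t) :
    HasSum (hyp0F1MulCoeff a b t) ((∑' n, hyp0F1Term a t n) * ∑' n, hyp0F1Term b t n) := by
  have hna := summable_norm_iff.mpr (summable_hyp0F1Term ha ht)
  have hnb := summable_norm_iff.mpr (summable_hyp0F1Term hb ht)
  rw [tsum_mul_tsum_eq_tsum_sum_antidiagonal_of_summable_norm hna hnb,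
    ← funext (sum_antidiagonal_hyp0F1Term_mul ha hb t)]
  exact (summable_norm_sum_mul_antidiagonal_of_summable_norm hna hnb).of_norm.hasSum

theorem hyp0F1MulCoeff_turan (ha : 0 < a) (ht : 0 ≤ t) (m : ℕ) :
    a / (a + 1) * hyp0F1MulCoeff a (a + 2) t m ≤ hyp0F1MulCoeff (a + 1) (a + 1) t m := by
  have hA := ascPochhammer_pos m a ha
  have hB := ascPochhammer_pos m (a + 1) (by positivity)
  have hC := ascPochhammer_pos m (a + 2) (by positivity)
  have hN := ascPochhammer_pos m (a + (a + 2) + m - 1) (by linarith [m.cast_nonneg (α := ℝ)])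
  rw [hyp0F1MulCoeff, hyp0F1MulCoeff, show a + 1 + (a + 1) = a + (a + 2) by ring,
    mul_div_assoc', div_le_div_iff₀ (by positivity) (by positivity)]
  have key := mul_le_mul_of_nonneg_left (ascPochhammer_eval_turan ha m)
    (by positivity : 0 ≤ t ^ m * (ascPochhammer ℝ m).eval (a + (a + 2) + m - 1) * m !)
  linear_combination key

end Hyp0F1

theorem turan_modified (p : ℝ) (hp : -1 < p) (x : ℝ) :
    besselIn (p+1) x ^ 2 - ((p+1)/(p+2)) * besselIn p x * besselIn (p+2) x > 0 := by
  have ha : 0 < p + 1 := by linarith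
  have ht : 0 ≤ x ^ 2 / 4 := by positivity
  have h0 := besselIn_eq_tsum_hyp0F1Term hp x
  have h1 := besselIn_eq_tsum_hyp0F1Term (p := p + 1) (by linarith) x
  have h2 := besselIn_eq_tsum_hyp0F1Term (p := p + 2) (by linarith) x
  rw [show p + 2 + 1 = p + 1 + 2 by ring] at h2
  rw [gt_iff_lt, sub_pos, sq, mul_assoc, h0, h1, h2, show p + 2 = p + 1 + 1 by ring]
  refine hasSum_lt (i := 0) (hyp0F1MulCoeff_turan ha ht) ?_
    ((hasSum_hyp0F1MulCoeff ha (by positivity) ht).mul_left _)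
    (hasSum_hyp0F1MulCoeff (by positivity) (by positivity) ht)
  rw [hyp0F1MulCoeff_zero, hyp0F1MulCoeff_zero, mul_one, div_lt_one (by positivity)]
  exact lt_add_one _
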